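/- arXiv:1112.0098 — 2 statements merged into one kernel-verified Lean document; each statement's English description precedes it below -/
import Mathlib

section
/- If f : (0,∞) → ℝ is nonnegative and n-matrix concave for some n ≥ 1, then f is n-matrix monotone. -/
open Matrix Set
open scoped ComplexOrder

noncomputable section

/-- `f` is `n`-matrix monotone on `I`. -/
def MatMonoOn (n : ℕ) (I : Set ℝ) (f : ℝ → ℝ) : Prop :=
  ∀ (A B : Matrix (Fin n) (Fin n) ℂ) (hA : A.IsHermitian) (hB : B.IsHermitian),
    (∀ i, hA.eigenvalues i ∈ I) → (∀ i, hB.eigenvalues i ∈ I) →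
    (B - A).PosSemidef → (hB.cfc f - hA.cfc f).PosSemidef

/-- `f` is `n`-matrix concave on `I`. -/
def MatConcaveOn (n : ℕ) (I : Set ℝ) (f : ℝ → ℝ) : Prop :=
  ∀ (A B : Matrix (Fin n) (Fin n) ℂ) (hA : A.IsHermitian) (hB : B.IsHermitian)
    (s : ℝ), s ∈ Icc (0:ℝ) 1 →
    (∀ i, hA.eigenvalues i ∈ I) → (∀ i, hB.eigenvalues i ∈ I) →
    ∀ (hC : ((s:ℂ) • A + ((1:ℂ) - (s:ℂ)) • B).IsHermitian),
      (hC.cfc f - ((s:ℂ) • hA.cfc f + ((1:ℂ) - (s:ℂ)) • hB.cfc f)).PosSemidef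

/-- `f` is `n`-matrix convex on `I`. -/
def MatConvexOn (n : ℕ) (I : Set ℝ) (f : ℝ → ℝ) : Prop :=
  ∀ (A B : Matrix (Fin n) (Fin n) ℂ) (hA : A.IsHermitian) (hB : B.IsHermitian)
    (s : ℝ), s ∈ Icc (0:ℝ) 1 →
    (∀ i, hA.eigenvalues i ∈ I) → (∀ i, hB.eigenvalues i ∈ I) →
    ∀ (hC : ((s:ℂ) • A + ((1:ℂ) - (s:ℂ)) • B).IsHermitian),
      (((s:ℂ) • hA.cfc f + ((1:ℂ) - (s:ℂ)) • hB.cfc f) - hC.cfc f).PosSemidef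

/-- First divided difference. -/
def dd (f : ℝ → ℝ) (t s : ℝ) : ℝ :=
  if t = s then deriv f t else (f t - f s) / (t - s)

/-- Second divided difference. -/
def dd2 (f : ℝ → ℝ) (t s r : ℝ) : ℝ :=
  if t = s then
    (if s = r then deriv (deriv f) t / 2 else (deriv f t - dd f t r) / (t - r))
  else if t = r then (deriv f t - dd f t s) / (t - s)
  else (dd f t s - dd f s r) / (t - r)

/-! For `0 < l < 1` write `B = l • A + (1 - l) • D` with
`D = (1 - l)⁻¹ • ((B - A) + (1 - l) • A)`, which is positive definite because `A` is and `A ≤ B`.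
Matrix concavity and `f ≥ 0` then give `f B ≥ l • f A + (1 - l) • f D ≥ l • f A`, and letting
`l → 1` (the positive semidefinite cone is closed) yields `f A ≤ f B`. -/

open Filter Topology
open scoped MatrixOrder

namespace Matrix

variable {n 𝕜 : Type*} [Fintype n] [RCLike 𝕜]

theorem isClosed_setOf_posSemidef : IsClosed {A : Matrix n n 𝕜 | A.PosSemidef} := by
  simp only [posSemidef_iff_dotProduct_mulVec, ofPred_and, ofPred_forall]
  exact (isClosed_eq continuous_id.matrix_conjTranspose continuous_id).inter <|
    isClosed_iInter fun x => isClosed_le continuous_const <|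
      continuous_const.dotProduct (continuous_id.matrix_mulVec continuous_const)

theorem PosDef.spectrum_subset_Ioi [DecidableEq n] {A : Matrix n n 𝕜} (hA : A.PosDef) :
    spectrum ℝ A ⊆ Ioi 0 := by
  rw [hA.isHermitian.spectrum_real_eq_range_eigenvalues]
  exact range_subset_iff.mpr hA.eigenvalues_pos

instance instOrderClosedTopology : OrderClosedTopology (Matrix n n 𝕜) :=
  ⟨isClosed_setOf_posSemidef.preimage (continuous_snd.sub continuous_fst)⟩

end Matrix

variable {n : ℕ} {f : ℝ → ℝ} {A B : Matrix (Fin n) (Fin n) ℂ}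

theorem MatConcaveOn.smul_cfc_add_smul_cfc_le (hf : MatConcaveOn n (Ioi 0) f) (hA : A.PosDef)
    (hB : B.PosDef) {s : ℝ} (hs : s ∈ Icc (0 : ℝ) 1) :
    s • cfc f A + (1 - s) • cfc f B ≤ cfc f (s • A + (1 - s) • B) := by
  have hcoe : ∀ M : Matrix (Fin n) (Fin n) ℂ, (s : ℂ) • M = s • M := Complex.coe_smul s
  have hcoe' : ∀ M : Matrix (Fin n) (Fin n) ℂ, ((1 : ℂ) - s) • M = (1 - s) • M := fun M => by
    rw [← Complex.coe_smul]; push_cast; rfl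
  have hC : ((s : ℂ) • A + ((1 : ℂ) - s) • B).IsHermitian := by
    rw [hcoe, hcoe']
    exact ((IsSelfAdjoint.all s).smul hA.isHermitian).add
      ((IsSelfAdjoint.all _).smul hB.isHermitian)
  have h := hf A B hA.isHermitian hB.isHermitian s hs hA.eigenvalues_pos hB.eigenvalues_pos hC
  rwa [← hA.isHermitian.cfc_eq, ← hB.isHermitian.cfc_eq, ← hC.cfc_eq, hcoe, hcoe, hcoe',
    hcoe'] at h

theorem MatConcaveOn.smul_cfc_le_cfc (hf : MatConcaveOn n (Ioi 0) f)
    (hpos : ∀ t ∈ Ioi (0 : ℝ), 0 ≤ f t) (hA : A.PosDef) (hAB : A ≤ B) {l : ℝ}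
    (hl : l ∈ Ioo (0 : ℝ) 1) : l • cfc f A ≤ cfc f B := by
  obtain ⟨hl0, hlt1⟩ := hl
  have hl' : 0 < 1 - l := sub_pos.mpr hlt1
  set D := (1 - l)⁻¹ • (B - l • A)
  have hD : D.PosDef := by
    refine PosDef.smul ?_ (inv_pos.mpr hl')
    have hsplit : B - l • A = (B - A) + (1 - l) • A := by module
    rw [hsplit]
    exact (hA.smul hl').posSemidef_add hAB
  have hBD : l • A + (1 - l) • D = B := by
    simp only [D, smul_smul, mul_inv_cancel₀ hl'.ne', one_smul]
    abel
  have hfD : 0 ≤ (1 - l) • cfc f D :=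
    smul_nonneg hl'.le (cfc_nonneg fun x hx => hpos x (hD.spectrum_subset_Ioi hx))
  calc l • cfc f A ≤ l • cfc f A + (1 - l) • cfc f D := le_add_of_nonneg_right hfD
    _ ≤ cfc f B := hBD ▸ hf.smul_cfc_add_smul_cfc_le hA hD ⟨hl0.le, hlt1.le⟩

theorem stmt1_general (n : ℕ) (f : ℝ → ℝ)
    (hpos : ∀ t ∈ Ioi (0:ℝ), 0 ≤ f t)
    (hf : MatConcaveOn n (Ioi 0) f) : MatMonoOn n (Ioi 0) f := by
  intro A B hA hB hAe _ hAB
  have hApos : A.PosDef := hA.posDef_iff_eigenvalues_pos.mpr hAe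
  rw [← hA.cfc_eq, ← hB.cfc_eq, ← le_iff]
  have hlim : Tendsto (fun l : ℝ => l • cfc f A) (𝓝[<] 1) (𝓝 (cfc f A)) := by
    simpa using (tendsto_nhdsWithin_of_tendsto_nhds (tendsto_id (x := 𝓝 (1 : ℝ)))).smul_const
      (cfc f A)
  exact le_of_tendsto hlim <| mem_of_superset (Ioo_mem_nhdsLT one_pos) fun l hl =>
    hf.smul_cfc_le_cfc hpos hApos hAB hl

theorem stmt1 (n : ℕ) (hn : 1 ≤ n) (f : ℝ → ℝ)
    (hpos : ∀ t ∈ Ioi (0:ℝ), 0 ≤ f t)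
    (hf : MatConcaveOn n (Ioi 0) f) : MatMonoOn n (Ioi 0) f :=
  stmt1_general n f hpos hf

end
end

section
/- If f : (0,∞) → ℝ is 2-matrix monotone and differentiable, then for all t ≠ s in (0,∞): f'(t)·f'(s) ≥ ((f(t) − f(s))/(t − s))². -/
open Matrix Set
open scoped ComplexOrder

noncomputable section

/-!
For `s < t` and `δ ≥ 0`, the matrix `B δ = diag(t, s) + δ • 𝟙𝟙ᴴ` dominates `B 0 = diag(t, s)`.
Its eigenvalues are `t + δ + g` and `s + δ - g`, where `g (t - s + g) = δ²`, so `g = o(δ)`.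
On these two points `f` agrees with the affine function of slope `b` through them, hence
`f (B δ) - f (B 0) = !![f (t + δ + g) - b g - f t, b δ; b δ, f (s + δ - g) + b g - f s]`.
Matrix monotonicity makes this positive semidefinite, so its determinant is nonnegative:
`(b δ)² ≤` the product of the diagonal entries. Dividing by `δ²` and letting `δ → 0⁺`,
`b → (f t - f s) / (t - s)` while the diagonal entries divided by `δ` tend to `f' t` and `f' s`.
-/

open Filter Topology

namespace Matrix.IsHermitian

variable {n 𝕜 : Type*} [Fintype n] [DecidableEq n] [RCLike 𝕜] {A : Matrix n n 𝕜}

lemma eval_charpoly_eigenvalues (hA : A.IsHermitian) (i : n) :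
    A.charpoly.eval (hA.eigenvalues i : 𝕜) = 0 := by
  rw [hA.charpoly_eq, Polynomial.eval_prod]
  exact Finset.prod_eq_zero (Finset.mem_univ i) (by simp)

lemma cfc_eq_algebraMap_add_smul (hA : A.IsHermitian) {f : ℝ → ℝ} {α β : ℝ}
    (hf : ∀ i, f (hA.eigenvalues i) = α + β * hA.eigenvalues i) :
    hA.cfc f = algebraMap ℝ _ α + β • A := by
  have hfA : (spectrum ℝ A).EqOn f (fun x ↦ α + β * x) := by
    rw [hA.spectrum_real_eq_range_eigenvalues]
    rintro _ ⟨i, rfl⟩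
    exact hf i
  have hA' : IsSelfAdjoint A := hA
  rw [← hA.cfc_eq, cfc_congr hfA, cfc_const_add _ _ _ (by fun_prop) hA',
    cfc_const_mul_id _ _ hA']

end Matrix.IsHermitian

def diagAddAllOnes (t s δ : ℝ) : Matrix (Fin 2) (Fin 2) ℂ :=
  !![(t : ℂ) + δ, δ; δ, (s : ℂ) + δ]

lemma isHermitian_diagAddAllOnes (t s δ : ℝ) : (diagAddAllOnes t s δ).IsHermitian := by
  ext i j
  fin_cases i <;> fin_cases j <;> simp [diagAddAllOnes]

lemma posSemidef_diagAddAllOnes_sub_zero (t s : ℝ) {δ : ℝ} (hδ : 0 ≤ δ) :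
    (diagAddAllOnes t s δ - diagAddAllOnes t s 0).PosSemidef := by
  have h : diagAddAllOnes t s δ - diagAddAllOnes t s 0 = δ • vecMulVec 1 (star 1) := by
    ext i j
    fin_cases i <;> fin_cases j <;> simp [diagAddAllOnes, vecMulVec]
  rw [h]
  exact (posSemidef_vecMulVec_self_star 1).smul hδ

lemma posDef_diagAddAllOnes {t s δ : ℝ} (ht : 0 < t) (hs : 0 < s) (hδ : 0 ≤ δ) :
    (diagAddAllOnes t s δ).PosDef := by
  have h0 : diagAddAllOnes t s 0 = diagonal ![(t : ℂ), s] := by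
    ext i j
    fin_cases i <;> fin_cases j <;> simp [diagAddAllOnes]
  have hpos : (diagAddAllOnes t s 0).PosDef := by
    rw [h0, posDef_diagonal_iff]
    intro i
    fin_cases i <;> simpa
  simpa using hpos.add_posSemidef (posSemidef_diagAddAllOnes_sub_zero t s hδ)

def eigShift (t s δ : ℝ) : ℝ := (√((t - s) ^ 2 + 4 * δ ^ 2) - (t - s)) / 2

lemma eigShift_mul (t s δ : ℝ) : eigShift t s δ * (t - s + eigShift t s δ) = δ ^ 2 := by
  have h := Real.sq_sqrt (by positivity : 0 ≤ (t - s) ^ 2 + 4 * δ ^ 2)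
  unfold eigShift
  linear_combination h / 4

lemma eigShift_zero {t s : ℝ} (hst : s ≤ t) : eigShift t s 0 = 0 := by
  simp [eigShift, Real.sqrt_sq (sub_nonneg.mpr hst)]

lemma hasDerivAt_eigShift {t s : ℝ} (hst : s ≠ t) : HasDerivAt (eigShift t s) 0 0 := by
  have hpos : (t - s) ^ 2 + 4 * (0 : ℝ) ^ 2 ≠ 0 := by
    simpa using sub_ne_zero.mpr hst.symm
  have h := ((((hasDerivAt_id (0 : ℝ)).pow 2).const_mul 4).const_add ((t - s) ^ 2)).sqrt hpos
  unfold eigShift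
  simpa using (h.sub_const (t - s)).div_const 2

lemma eigenvalues_diagAddAllOnes (t s δ : ℝ) (i : Fin 2) :
    (isHermitian_diagAddAllOnes t s δ).eigenvalues i = t + δ + eigShift t s δ ∨
      (isHermitian_diagAddAllOnes t s δ).eigenvalues i = s + δ - eigShift t s δ := by
  have h := (isHermitian_diagAddAllOnes t s δ).eval_charpoly_eigenvalues i
  rw [RCLike.ofReal_eq_complex_ofReal] at h
  generalize (isHermitian_diagAddAllOnes t s δ).eigenvalues i = μ at h ⊢
  rw [charpoly_fin_two, trace_fin_two, det_fin_two] at h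
  simp only [diagAddAllOnes, of_apply, cons_val', cons_val_zero, cons_val_one, empty_val',
    cons_val_fin_one, Polynomial.eval_add, Polynomial.eval_sub, Polynomial.eval_mul,
    Polynomial.eval_pow, Polynomial.eval_X, Polynomial.eval_C] at h
  have hμ : (μ - (t + δ + eigShift t s δ)) * (μ - (s + δ - eigShift t s δ)) = 0 := by
    have hc : ((μ ^ 2 - (t + s + 2 * δ) * μ + ((t + δ) * (s + δ) - δ ^ 2) : ℝ) : ℂ) = 0 := by
      push_cast
      linear_combination h
    linear_combination (Complex.ofReal_eq_zero.mp hc) - eigShift_mul t s δ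
  rcases mul_eq_zero.mp hμ with hplus | hminus
  · exact .inl (sub_eq_zero.mp hplus)
  · exact .inr (sub_eq_zero.mp hminus)

def eigSlope (f : ℝ → ℝ) (t s δ : ℝ) : ℝ :=
  slope f (s + δ - eigShift t s δ) (t + δ + eigShift t s δ)

lemma cfc_diagAddAllOnes (f : ℝ → ℝ) (t s δ : ℝ) :
    (isHermitian_diagAddAllOnes t s δ).cfc f =
      !![((f (t + δ + eigShift t s δ) - eigSlope f t s δ * eigShift t s δ : ℝ) : ℂ),
          ((eigSlope f t s δ * δ : ℝ) : ℂ);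
        ((eigSlope f t s δ * δ : ℝ) : ℂ),
          ((f (s + δ - eigShift t s δ) + eigSlope f t s δ * eigShift t s δ : ℝ) : ℂ)] := by
  have heig := eigenvalues_diagAddAllOnes t s δ
  set g := eigShift t s δ
  set b := eigSlope f t s δ
  have hslope : (t + δ + g - (s + δ - g)) * b = f (t + δ + g) - f (s + δ - g) :=
    sub_smul_slope f _ _
  have hb : f (s + δ - g) = f (t + δ + g) - (t + δ + g - (s + δ - g)) * b := by
    linear_combination hslope
  rw [(isHermitian_diagAddAllOnes t s δ).cfc_eq_algebraMap_add_smul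
    (α := f (t + δ + g) - b * (t + δ + g)) (β := b), hb]
  · ext i j
    fin_cases i <;> fin_cases j <;>
      simp [diagAddAllOnes, Algebra.algebraMap_eq_smul_one] <;> ring
  · intro i
    rcases heig i with h | h <;> rw [h]
    · ring
    · rw [hb]; ring

lemma sq_eigSlope_mul_le {f : ℝ → ℝ} (hf : MatMonoOn 2 (Ioi 0) f) {t s δ : ℝ} (ht : 0 < t)
    (hs : 0 < s) (hst : s ≤ t) (hδ : 0 ≤ δ) :
    (eigSlope f t s δ * δ) ^ 2 ≤
      (f (t + δ + eigShift t s δ) - eigSlope f t s δ * eigShift t s δ - f t) *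
        (f (s + δ - eigShift t s δ) + eigSlope f t s δ * eigShift t s δ - f s) := by
  have hpos (δ : ℝ) (hδ : 0 ≤ δ) (i : Fin 2) :
      (isHermitian_diagAddAllOnes t s δ).eigenvalues i ∈ Ioi 0 :=
    (posDef_diagAddAllOnes ht hs hδ).eigenvalues_pos i
  have hpsd := hf _ _ _ _ (hpos 0 le_rfl) (hpos δ hδ) (posSemidef_diagAddAllOnes_sub_zero t s hδ)
  have hdet := hpsd.det_nonneg
  rw [cfc_diagAddAllOnes, cfc_diagAddAllOnes, eigShift_zero hst, det_fin_two] at hdet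
  simp only [Matrix.sub_apply, of_apply, cons_val', cons_val_zero, cons_val_one, empty_val',
    cons_val_fin_one, add_zero, sub_zero, mul_zero] at hdet
  rw [← sub_nonneg, ← Complex.zero_le_real]
  convert hdet using 1
  push_cast
  ring

lemma eigSlope_zero (f : ℝ → ℝ) {t s : ℝ} (hst : s ≤ t) :
    eigSlope f t s 0 = slope f s t := by
  simp [eigSlope, eigShift_zero hst]

lemma hasDerivAt_comp_add_eigShift {f : ℝ → ℝ} {t s : ℝ} (hft : DifferentiableAt ℝ f t)
    (hst : s < t) : HasDerivAt (fun δ ↦ f (t + δ + eigShift t s δ)) (deriv f t) 0 := by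
  have h : HasDerivAt (fun δ ↦ t + δ + eigShift t s δ) 1 0 :=
    (((hasDerivAt_id (0 : ℝ)).const_add t).add (hasDerivAt_eigShift hst.ne)).congr_deriv
      (add_zero 1)
  exact (hft.hasDerivAt.comp_of_eq 0 h (by simp [eigShift_zero hst.le])).congr_deriv (mul_one _)

lemma hasDerivAt_comp_sub_eigShift {f : ℝ → ℝ} {t s : ℝ} (hfs : DifferentiableAt ℝ f s)
    (hst : s < t) : HasDerivAt (fun δ ↦ f (s + δ - eigShift t s δ)) (deriv f s) 0 := by
  have h : HasDerivAt (fun δ ↦ s + δ - eigShift t s δ) 1 0 :=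
    (((hasDerivAt_id (0 : ℝ)).const_add s).sub (hasDerivAt_eigShift hst.ne)).congr_deriv
      (sub_zero 1)
  exact (hfs.hasDerivAt.comp_of_eq 0 h (by simp [eigShift_zero hst.le])).congr_deriv (mul_one _)

lemma continuousAt_eigSlope {f : ℝ → ℝ} {t s : ℝ} (hft : DifferentiableAt ℝ f t)
    (hfs : DifferentiableAt ℝ f s) (hst : s < t) : ContinuousAt (eigSlope f t s) 0 := by
  have hg := (hasDerivAt_eigShift hst.ne).continuousAt
  have hden : t + 0 + eigShift t s 0 - (s + 0 - eigShift t s 0) ≠ 0 := by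
    simpa [eigShift_zero hst.le] using sub_ne_zero.mpr hst.ne'
  change ContinuousAt (fun δ ↦ slope f (s + δ - eigShift t s δ) (t + δ + eigShift t s δ)) 0
  simp only [slope_def_field]
  exact ((hasDerivAt_comp_add_eigShift hft hst).continuousAt.sub
    (hasDerivAt_comp_sub_eigShift hfs hst).continuousAt).div
    (((continuousAt_const.add continuousAt_id).add hg).sub
      ((continuousAt_const.add continuousAt_id).sub hg)) hden

lemma sq_slope_le_deriv_mul_deriv {f : ℝ → ℝ} (hf : MatMonoOn 2 (Ioi 0) f) {t s : ℝ}
    (hft : DifferentiableAt ℝ f t) (hfs : DifferentiableAt ℝ f s) (hs : 0 < s) (hst : s < t) :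
    slope f s t ^ 2 ≤ deriv f t * deriv f s := by
  have hg0 : eigShift t s 0 = 0 := eigShift_zero hst.le
  have hb : Tendsto (eigSlope f t s) (𝓝[>] 0) (𝓝 (slope f s t)) :=
    eigSlope_zero f hst.le ▸ (continuousAt_eigSlope hft hfs hst).tendsto.mono_left
      nhdsWithin_le_nhds
  have hg : Tendsto (fun δ ↦ eigShift t s δ / δ) (𝓝[>] 0) (𝓝 0) := by
    simpa [hg0, div_eq_inv_mul] using (hasDerivAt_eigShift hst.ne).tendsto_slope_zero_right
  have hX : Tendsto
      (fun δ ↦ (f (t + δ + eigShift t s δ) - eigSlope f t s δ * eigShift t s δ - f t) / δ)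
      (𝓝[>] 0) (𝓝 (deriv f t)) := by
    have h := (hasDerivAt_comp_add_eigShift hft hst).tendsto_slope_zero_right.sub (hb.mul hg)
    simp only [zero_add, hg0, add_zero, smul_eq_mul, mul_zero, sub_zero] at h
    refine h.congr fun δ ↦ ?_
    ring
  have hY : Tendsto
      (fun δ ↦ (f (s + δ - eigShift t s δ) + eigSlope f t s δ * eigShift t s δ - f s) / δ)
      (𝓝[>] 0) (𝓝 (deriv f s)) := by
    have h := (hasDerivAt_comp_sub_eigShift hfs hst).tendsto_slope_zero_right.add (hb.mul hg)
    simp only [zero_add, hg0, sub_zero, add_zero, smul_eq_mul, mul_zero] at h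
    refine h.congr fun δ ↦ ?_
    ring
  refine le_of_tendsto_of_tendsto (hb.pow 2) (hX.mul hY) ?_
  filter_upwards [self_mem_nhdsWithin] with δ (hδ : 0 < δ)
  have h := sq_eigSlope_mul_le hf (hs.trans hst) hs hst.le hδ.le
  rw [div_mul_div_comm, le_div_iff₀ (by positivity)]
  linarith [mul_pow (eigSlope f t s δ) δ 2]

theorem stmt11 (f : ℝ → ℝ) (hf : MatMonoOn 2 (Ioi 0) f)
    (hdiff : ∀ t ∈ Ioi (0:ℝ), DifferentiableAt ℝ f t)
    (t s : ℝ) (ht : 0 < t) (hs : 0 < s) (hts : t ≠ s) :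
    ((f t - f s) / (t - s)) ^ 2 ≤ deriv f t * deriv f s := by
  rw [← slope_def_field]
  rcases hts.lt_or_gt with hts | hst
  · rw [slope_comm, mul_comm]
    exact sq_slope_le_deriv_mul_deriv hf (hdiff s hs) (hdiff t ht) ht hts
  · exact sq_slope_le_deriv_mul_deriv hf (hdiff t ht) (hdiff s hs) hs hst

end
end
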